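/- arXiv:1702.06017 — 4 statements merged into one kernel-verified Lean document; each statement's English description precedes it below -/
import Mathlib

section
/- Let $z, z'$ be rationals with numerators and denominators bounded by $\Delta$ (an integer $\ge 1$), with $0 \le z, z' \le \Delta$. Then $\lfloor \Delta^2(\Delta - z)\rfloor = \lfloor \Delta^2(\Delta - z')\rfloor$ if and only if $z = z'$, and $\lfloor \Delta^2(\Delta - z)\rfloor > \lfloor \Delta^2(\Delta - z')\rfloor$ if and only if $z < z'$. -/
lemma key_floor_lt (Δ : ℤ) (hΔ : 1 ≤ Δ) (z z' : ℚ)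
    (hzden : (z.den : ℤ) ≤ Δ) (hz'den : (z'.den : ℤ) ≤ Δ)
    (h : z < z') :
    ⌊(Δ : ℚ) ^ 2 * ((Δ : ℚ) - z')⌋ < ⌊(Δ : ℚ) ^ 2 * ((Δ : ℚ) - z)⌋ := by
  have hdpos : (0:ℚ) < (z.den:ℚ) * (z'.den:ℚ) := by positivity
  have hzd : (0:ℚ) < (z.den:ℚ) := by positivity
  have hz'd : (0:ℚ) < (z'.den:ℚ) := by positivity
  have e1 : (z.num:ℚ) = z * z.den := (div_eq_iff (ne_of_gt hzd)).mp (Rat.num_div_den z)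
  have e2 : (z'.num:ℚ) = z' * z'.den := (div_eq_iff (ne_of_gt hz'd)).mp (Rat.num_div_den z')
  have hnumQ : (z.num:ℚ) * z'.den < (z'.num:ℚ) * z.den := by
    rw [e1, e2]; nlinarith
  have hnumZ : z.num * z'.den + 1 ≤ z'.num * z.den := by
    have : z.num * (z'.den:ℤ) < z'.num * z.den := by exact_mod_cast hnumQ
    omega
  have hnumQ' : (z.num:ℚ) * z'.den + 1 ≤ (z'.num:ℚ) * z.den := by exact_mod_cast hnumZ
  have h1 : (1:ℚ) / ((z.den:ℚ) * (z'.den:ℚ)) ≤ z' - z := by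
    rw [div_le_iff₀ hdpos]
    calc (1:ℚ) ≤ (z'.num:ℚ) * z.den - (z.num:ℚ) * z'.den := by linarith
      _ = (z' - z) * ((z.den:ℚ) * (z'.den:ℚ)) := by rw [e1, e2]; ring
  have h2 : (1:ℚ) ≤ (Δ:ℚ)^2 * (z' - z) := by
    have hΔq : ((z.den:ℚ) * (z'.den:ℚ)) ≤ (Δ:ℚ)^2 := by
      have a : (z.den:ℚ) ≤ (Δ:ℚ) := by exact_mod_cast hzden
      have b : (z'.den:ℚ) ≤ (Δ:ℚ) := by exact_mod_cast hz'den
      have c : (0:ℚ) ≤ (z.den:ℚ) := by positivity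
      have d : (0:ℚ) ≤ (z'.den:ℚ) := by positivity
      calc (z.den:ℚ) * (z'.den:ℚ) ≤ (Δ:ℚ) * (Δ:ℚ) := by
            exact mul_le_mul a b d (le_trans c a)
        _ = (Δ:ℚ)^2 := by ring
    calc (1:ℚ) = ((z.den:ℚ) * (z'.den:ℚ)) * (1 / ((z.den:ℚ) * (z'.den:ℚ))) := by
          field_simp
      _ ≤ (Δ:ℚ)^2 * (z' - z) := by
          apply mul_le_mul hΔq h1 (by positivity) (by positivity)
  have h3 : (Δ:ℚ)^2 * ((Δ:ℚ) - z') + 1 ≤ (Δ:ℚ)^2 * ((Δ:ℚ) - z) := by nlinarith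
  calc ⌊(Δ : ℚ) ^ 2 * ((Δ : ℚ) - z')⌋ < ⌊(Δ : ℚ) ^ 2 * ((Δ : ℚ) - z')⌋ + 1 := by omega
    _ = ⌊(Δ : ℚ) ^ 2 * ((Δ : ℚ) - z') + 1⌋ := (Int.floor_add_one _).symm
    _ ≤ ⌊(Δ : ℚ) ^ 2 * ((Δ : ℚ) - z)⌋ := Int.floor_le_floor h3

theorem stmt11 (Δ : ℤ) (hΔ : 1 ≤ Δ) (z z' : ℚ)
    (hznum : |z.num| ≤ Δ) (hz'num : |z'.num| ≤ Δ)
    (hzden : (z.den : ℤ) ≤ Δ) (hz'den : (z'.den : ℤ) ≤ Δ)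
    (hz0 : 0 ≤ z) (hz1 : z ≤ (Δ : ℚ)) (hz'0 : 0 ≤ z') (hz'1 : z' ≤ (Δ : ℚ)) :
    (⌊(Δ : ℚ) ^ 2 * ((Δ : ℚ) - z)⌋ = ⌊(Δ : ℚ) ^ 2 * ((Δ : ℚ) - z')⌋ ↔ z = z') ∧
    (⌊(Δ : ℚ) ^ 2 * ((Δ : ℚ) - z)⌋ > ⌊(Δ : ℚ) ^ 2 * ((Δ : ℚ) - z')⌋ ↔ z < z') := by
  constructor
  · constructor
    · intro h
      rcases lt_trichotomy z z' with hlt | heq | hgt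
      · exact absurd h (ne_of_gt (key_floor_lt Δ hΔ z z' hzden hz'den hlt))
      · exact heq
      · exact absurd h (ne_of_lt (key_floor_lt Δ hΔ z' z hz'den hzden hgt))
    · rintro rfl; rfl
  · constructor
    · intro h
      rcases lt_trichotomy z z' with hlt | heq | hgt
      · exact hlt
      · subst heq; exact absurd h (lt_irrefl _)
      · exact absurd (key_floor_lt Δ hΔ z' z hz'den hzden hgt) (by omega)
    · exact key_floor_lt Δ hΔ z z' hzden hz'den
end

section
/- In the EndOfMeteredLine-to-EndOfPotentialLine reduction (as defined), if $x = (b,u) \in \{0,1\}^{n+1}$ satisfies $x \neq S'(x)$, $P'(S'(x)) = x$, and $V'(S'(x)) - V'(x) \le 0$ (an R2-type solution of the EndOfPotentialLine instance), then $u$ satisfies $V(u) > 0$ and $V(S(u)) - V(u) \neq 1$, i.e., $u$ is a T3-type solution of the EndOfMeteredLine instance. -/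
theorem stmt16 (n : ℕ)
    (S P : (Fin n → Bool) → (Fin n → Bool)) (V : (Fin n → Bool) → ℕ)
    (z : Fin n → Bool) (hz : z = fun _ => false)
    (hP0 : P z = z) (hS0 : S z ≠ z) (hV0 : V z = 1)
    (hVbound : ∀ u, V u ≤ 2 ^ n)
    (S' P' : Bool × (Fin n → Bool) → Bool × (Fin n → Bool))
    (V' : Bool × (Fin n → Bool) → ℕ)
    (hV'0 : ∀ u, V' (false, u) = 0)
    (hV'1 : ∀ u, V' (true, u) = V u)
    (hS'1 : S' (false, z) = (true, z))
    (hS'2 : ∀ u, u ≠ z → S' (false, u) = (false, u))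
    (hS'3 : ∀ u, V u = 0 → S' (true, u) = (true, u))
    (hS'4 : ∀ u, V u > 0 → S' (true, u) = (true, S u))
    (hP'1 : P' (false, z) = (false, z))
    (hP'2 : ∀ u, u ≠ z → P' (false, u) = (false, u))
    (hP'3 : P' (true, z) = (false, z))
    (hP'4 : ∀ u, u ≠ z → V u = 0 → P' (true, u) = (true, u))
    (hP'5 : ∀ u, u ≠ z → V u > 0 → P' (true, u) = (true, P u))
    (b : Bool) (u : Fin n → Bool)
    (hx1 : (b, u) ≠ S' (b, u))
    (hx2 : P' (S' (b, u)) = (b, u))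
    (hx3 : V' (S' (b, u)) ≤ V' (b, u)) :
    V u > 0 ∧ V (S u) ≠ V u + 1 := by
  cases b with
  | false =>
    by_cases hu : u = z
    · subst hu
      rw [hS'1] at hx3
      rw [hV'1, hV'0, hV0] at hx3
      omega
    · exact absurd (hS'2 u hu).symm hx1
  | true =>
    rcases Nat.eq_zero_or_pos (V u) with h0 | hpos
    · exact absurd (hS'3 u h0).symm hx1
    · refine ⟨hpos, ?_⟩
      rw [hS'4 u hpos, hV'1, hV'1] at hx3
      omega
end

section
/- Let $G$ be a finite directed graph on vertex set $X$ given by functions $S, P : X \to X$, where there is an edge $u \to v$ iff $S(u) = v$ and $P(v) = u$ and $u \ne v$. Suppose every vertex has in-degree and out-degree at most 1 (which holds automatically), that $0 \in X$ has an outgoing edge but no incoming edge, and that no other vertex violates the degree-consistency conditions: for all $x \ne 0$, $S(P(x)) = x$ and $P(S(x)) = x$. Then the vertex $0$ starts an infinite forward $S$-trajectory that eventually cycles back, and if additionally there is a potential $V : X \to \mathbb{N}$ that strictly increases along every edge, we reach a contradiction: some vertex $x$ must satisfy $S(P(x)) \ne x \ne 0$ or $P(S(x)) \ne x$, or $x \neq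 S(x)$, $P(S(x)) = x$ and $V(S(x)) \le V(x)$. -/
theorem stmt18 {X : Type*} [Fintype X] (S P : X → X) (zero : X)
    (hPzero : P zero = zero) (hout : S zero ≠ zero) (hout' : P (S zero) = zero)
    (hcons : ∀ x, x ≠ zero → S (P x) = x ∧ P (S x) = x)
    (V : X → ℕ)
    (hmono : ∀ u v, S u = v → P v = u → u ≠ v → V u < V v) :
    ∃ x, (S (P x) ≠ x ∧ x ≠ zero) ∨ P (S x) ≠ x ∨
      (x ≠ S x ∧ P (S x) = x ∧ V (S x) ≤ V x) := by
  by_contra h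
  push_neg at h
  have hP : ∀ x, P (S x) = x := fun x => (h x).2.1
  have hV : ∀ x, x ≠ S x → V x < V (S x) := fun x hx => (h x).2.2 hx (hP x)
  have hinj : Function.Injective S := fun a b hab => by
    have := hP a; rw [hab, hP b] at this; exact this.symm
  have hne : ∀ n : ℕ, S^[n] zero ≠ S^[n+1] zero := by
    intro n
    induction n with
    | zero => simpa using fun h' => hout h'.symm
    | succ n ih =>
      intro hEq
      rw [Function.iterate_succ_apply', Function.iterate_succ_apply'] at hEq
      exact ih (hinj hEq)
  have hgrow : ∀ n : ℕ, n ≤ V (S^[n] zero) := by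
    intro n
    induction n with
    | zero => exact Nat.zero_le _
    | succ n ih =>
      have h1 : V (S^[n] zero) < V (S (S^[n] zero)) := by
        apply hV
        intro hEq
        exact hne n (by rw [Function.iterate_succ_apply']; exact hEq)
      rw [Function.iterate_succ_apply']
      omega
  have hbound : ∀ x, V x ≤ Finset.univ.sup V :=
    fun x => Finset.le_sup (Finset.mem_univ x)
  have := hgrow (Finset.univ.sup V + 1)
  have := hbound (S^[Finset.univ.sup V + 1] zero)
  omega
end

section
/- Let $S, P : X \to X$ be functions on a finite set $X$ with distinguished element $0 \in X$, $P(0) = 0 \ne S(0)$, and $V : X \to \mathbb{N}$ with $V(0) = 0$. If for every $x \in X$ with $x \neq S(x)$ and $P(S(x)) = x$ we have $V(S(x)) > V(x)$ (no R2 solutions), then there exists $x \in X$ with $S(P(x)) \ne x \ne 0$ or $P(S(x)) \ne x$ (an R1 solution). -/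
theorem stmt19 {X : Type*} [Fintype X] (S P : X → X) (zero : X)
    (hPzero : P zero = zero) (hSzero : S zero ≠ zero)
    (V : X → ℕ) (hVzero : V zero = 0)
    (hnoR2 : ∀ x, x ≠ S x → P (S x) = x → V x < V (S x)) :
    ∃ x, (S (P x) ≠ x ∧ x ≠ zero) ∨ P (S x) ≠ x := by
  by_contra h
  push_neg at h
  have hP : ∀ x, P (S x) = x := fun x => (h x).2
  have hinj : Function.Injective S := by
    intro a b hab
    rw [← hP a, ← hP b, hab]
  classical
  have hbij : Function.Bijective S := (Finite.injective_iff_bijective).mp hinj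
  set e : X ≃ X := Equiv.ofBijective S hbij with he
  set n := orderOf e with hn
  have hnpos : 0 < n := orderOf_pos e
  have hpow : e ^ n = 1 := pow_orderOf_eq_one e
  have hiter : S^[n] zero = zero := by
    have : (e ^ n) zero = zero := by rw [hpow]; rfl
    rwa [← Equiv.Perm.iterate_eq_pow e n] at this
  have key : ∀ k, k ≤ n → k ≤ V (S^[k] zero) := by
    intro k hk
    induction k with
    | zero => exact Nat.zero_le _
    | succ k ih =>
      have ihk := ih (Nat.le_of_succ_le hk)
      set y := S^[k] zero with hy
      have hne : y ≠ S y := by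
        intro hfix
        have hzy : zero = y := by
          have : S^[n] zero = S^[n - k] (S^[k] zero) := by
            rw [← Function.iterate_add_apply, Nat.sub_add_cancel (Nat.le_of_succ_le hk)]
          rw [hiter, ← hy, Function.iterate_fixed hfix.symm] at this
          exact this
        exact hSzero (by rw [hzy, ← hfix])
      have hlt : V y < V (S y) := hnoR2 y hne (hP y)
      have : S^[k+1] zero = S y := by rw [Function.iterate_succ_apply', hy]
      rw [this]
      omega
  have := key n le_rfl
  rw [hiter, hVzero] at this
  omega
end
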